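/- arXiv:1105.0288 — 7 statements merged into one kernel-verified Lean document; each statement's English description precedes it below -/
import Mathlib

section
/- Let U be a set of predicate symbols and M, N be sets of interpretations such that M is saturated relative to U. Then: (1) M = N if and only if M ⊆ N and N|U ⊆ M|U; (2) M is a proper subset of N if and only if M ⊆ N and M|U is a proper subset of N|U. -/
open Set

variable {A P : Type*}

/-- Restriction of an interpretation (set of atoms) to the predicate symbols in `U`. -/
def restr (pred : A → P) (U : Set P) (I : Set A) : Set A :=
  {p | p ∈ I ∧ pred p ∈ U}

/-- Restriction of a set of interpretations to the predicate symbols in `U`. -/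
def restrM (pred : A → P) (U : Set P) (M : Set (Set A)) : Set (Set A) :=
  restr pred U '' M

/-- `M` is saturated relative to `U`. -/
def saturated (pred : A → P) (U : Set P) (M : Set (Set A)) : Prop :=
  ∀ I : Set A, restr pred U I ∈ restrM pred U M → I ∈ M

/-- `σ_U(M)`: the set of all interpretations `I` with `I|U ∈ M|U`. -/
def sigmaSet (pred : A → P) (U : Set P) (M : Set (Set A)) : Set (Set A) :=
  {I | restr pred U I ∈ restrM pred U M}

/-- `M` is semi-saturated relative to `U`. -/
def semiSaturated (pred : A → P) (U : Set P) (M : Set (Set A)) : Prop :=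
  ∀ I : Set A, restr pred U I ∈ restrM pred U M →
    restr pred Uᶜ I ∈ restrM pred Uᶜ M → I ∈ M

/-- `M` is sequence-saturated relative to the family `S`. -/
def seqSaturated {ι : Type*} (pred : A → P) (S : ι → Set P) (M : Set (Set A)) : Prop :=
  ∀ I : Set A, (∀ α, restr pred (S α) I ∈ restrM pred (S α) M) → I ∈ M

/-- The difference in the interpretation of predicate symbol `Q` between `I` and `J`. -/
def diffP (pred : A → P) (Q : P) (I J : Set A) : Set A :=
  {p | p ∈ symmDiff I J ∧ pred p = Q}

/-- `J ≤_I J'` : `J` is at least as close to `I` as `J'`. -/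
def closerLE (pred : A → P) (I J J' : Set A) : Prop :=
  ∀ Q : P, diffP pred Q I J ⊆ diffP pred Q I J'

/-- `J <_I J'` : `J` is closer to `I` than `J'`. -/
def closerLT (pred : A → P) (I J J' : Set A) : Prop :=
  closerLE pred I J J' ∧ ¬ closerLE pred I J' J

/-- `I ⊕ N` for an interpretation `I` and a set of interpretations `N`. -/
def oplusI (pred : A → P) (I : Set A) (N : Set (Set A)) : Set (Set A) :=
  {J | J ∈ N ∧ ¬ ∃ J' ∈ N, closerLT pred I J' J}

/-- `M ⊕ N` for sets of interpretations `M`, `N`. -/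
def oplus (pred : A → P) (M N : Set (Set A)) : Set (Set A) :=
  ⋃ I ∈ M, oplusI pred I N

theorem saturated.subset_of_restrM_subset {pred : A → P} {U : Set P} {M N : Set (Set A)}
    (hM : saturated pred U M) (h : restrM pred U N ⊆ restrM pred U M) : N ⊆ M :=
  fun I hI => hM I (h ⟨I, hI, rfl⟩)

theorem restrM_mono (pred : A → P) (U : Set P) {M N : Set (Set A)} (h : M ⊆ N) :
    restrM pred U M ⊆ restrM pred U N :=
  image_mono h

theorem saturated.subset_iff_restrM_subset {pred : A → P} {U : Set P} {M N : Set (Set A)}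
    (hM : saturated pred U M) : N ⊆ M ↔ restrM pred U N ⊆ restrM pred U M :=
  ⟨restrM_mono pred U, hM.subset_of_restrM_subset⟩

theorem stmt_1 (pred : A → P) (U : Set P) (M N : Set (Set A))
    (hM : saturated pred U M) :
    (M = N ↔ M ⊆ N ∧ restrM pred U N ⊆ restrM pred U M) ∧
    (M ⊂ N ↔ M ⊆ N ∧ restrM pred U M ⊂ restrM pred U N) := by
  refine ⟨by rw [subset_antisymm_iff, hM.subset_iff_restrM_subset], ?_⟩
  rw [ssubset_iff_subset_not_subset, ssubset_iff_subset_not_subset, hM.subset_iff_restrM_subset]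
  exact ⟨fun ⟨hMN, hNM⟩ => ⟨hMN, restrM_mono pred U hMN, hNM⟩,
    fun ⟨hMN, _, hNM⟩ => ⟨hMN, hNM⟩⟩
end

section
/- Let U be a set of predicate symbols and M, N be sets of interpretations. The following conditions are equivalent: (1) N = σ_U(M); (2) N coincides with M on U and N is saturated relative to U; (3) N is the greatest (with respect to inclusion) among all sets of interpretations coinciding with M on U. Furthermore, if N satisfies one of these conditions, then M ⊆ N. -/
open Set

variable {A P : Type*}

section

variable (pred : A → P) (U : Set P) {M N : Set (Set A)}

theorem subset_sigmaSet (M : Set (Set A)) : M ⊆ sigmaSet pred U M :=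
  fun I hI => ⟨I, hI, rfl⟩

theorem subset_sigmaSet_of_restrM_subset (h : restrM pred U N ⊆ restrM pred U M) :
    N ⊆ sigmaSet pred U M :=
  fun I hI => h ⟨I, hI, rfl⟩

theorem restrM_sigmaSet (M : Set (Set A)) :
    restrM pred U (sigmaSet pred U M) = restrM pred U M :=
  (image_subset_iff.2 fun _ hI => hI).antisymm (image_mono (subset_sigmaSet pred U M))

theorem saturated_sigmaSet (M : Set (Set A)) : saturated pred U (sigmaSet pred U M) := by
  intro I hI
  rwa [restrM_sigmaSet] at hI

variable {pred U}

theorem saturated.eq_sigmaSet (hs : saturated pred U N)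
    (h : restrM pred U N = restrM pred U M) : N = sigmaSet pred U M :=
  (subset_sigmaSet_of_restrM_subset pred U h.le).antisymm fun I hI => hs I (h ▸ hI)

end

theorem stmt_5 (pred : A → P) (U : Set P) (M N : Set (Set A)) :
    (N = sigmaSet pred U M ↔
      restrM pred U N = restrM pred U M ∧ saturated pred U N) ∧
    (N = sigmaSet pred U M ↔
      restrM pred U N = restrM pred U M ∧
        ∀ N' : Set (Set A), restrM pred U N' = restrM pred U M → N' ⊆ N) ∧
    (N = sigmaSet pred U M → M ⊆ N) := by
  refine ⟨⟨?_, fun ⟨h, hs⟩ => hs.eq_sigmaSet h⟩, ⟨?_, ?_⟩, ?_⟩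
  · rintro rfl
    exact ⟨restrM_sigmaSet pred U M, saturated_sigmaSet pred U M⟩
  · rintro rfl
    exact ⟨restrM_sigmaSet pred U M, fun N' h => subset_sigmaSet_of_restrM_subset pred U h.le⟩
  · rintro ⟨h, hmax⟩
    exact (subset_sigmaSet_of_restrM_subset pred U h.le).antisymm
      (hmax _ (restrM_sigmaSet pred U M))
  · rintro rfl
    exact subset_sigmaSet pred U M
end

section
/- Let U₁, U₂ be sets of predicate symbols and M be a set of interpretations. Then σ_{U₂}(σ_{U₁}(M)) = σ_{U₁ ∩ U₂}(M). -/
open Set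

variable {A P : Type*}

section Restriction

variable (pred : A → P)

theorem restr_restr (U V : Set P) (I : Set A) :
    restr pred V (restr pred U I) = restr pred (U ∩ V) I := by
  ext p
  simp only [restr, mem_ofPred_eq, mem_inter_iff, and_assoc]

theorem restr_eq_restr_iff {U : Set P} {I J : Set A} :
    restr pred U I = restr pred U J ↔ ∀ p, pred p ∈ U → (p ∈ I ↔ p ∈ J) := by
  simp only [restr, Set.ext_iff, mem_ofPred_eq]
  exact forall_congr' fun p => by tauto

theorem mem_sigmaSet {U : Set P} {M : Set (Set A)} {I : Set A} :
    I ∈ sigmaSet pred U M ↔ ∃ K ∈ M, restr pred U K = restr pred U I :=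
  Iff.rfl

/-- Two interpretations agreeing on `U ∩ V` can be glued: take `I` on `V` and `K` off `V`. -/
theorem exists_restr_eq_of_restr_inter_eq {U V : Set P} {I K : Set A}
    (h : restr pred (U ∩ V) I = restr pred (U ∩ V) K) :
    ∃ J, restr pred V J = restr pred V I ∧ restr pred U J = restr pred U K := by
  rw [restr_eq_restr_iff] at h
  refine ⟨restr pred V I ∪ restr pred Vᶜ K, ?_, ?_⟩ <;> rw [restr_eq_restr_iff] <;>
    intro p hp <;> by_cases hV : pred p ∈ V
  all_goals simp_all [restr]

end Restriction

theorem stmt_6 (pred : A → P) (U₁ U₂ : Set P) (M : Set (Set A)) :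
    sigmaSet pred U₂ (sigmaSet pred U₁ M) = sigmaSet pred (U₁ ∩ U₂) M := by
  ext I
  simp only [mem_sigmaSet]
  constructor
  · rintro ⟨J, ⟨K, hK, hKJ⟩, hJI⟩
    refine ⟨K, hK, ?_⟩
    calc restr pred (U₁ ∩ U₂) K = restr pred U₂ (restr pred U₁ J) := by rw [← hKJ, restr_restr]
      _ = restr pred U₁ (restr pred U₂ I) := by rw [restr_restr, inter_comm, ← restr_restr, hJI]
      _ = restr pred (U₁ ∩ U₂) I := by rw [restr_restr, inter_comm]
  · rintro ⟨K, hK, hKI⟩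
    obtain ⟨J, hJI, hJK⟩ := exists_restr_eq_of_restr_inter_eq pred hKI.symm
    exact ⟨J, ⟨K, hK, hJK.symm⟩, hJI⟩
end

section
/- Let U be a set of predicate symbols and M₁, M₂ be nonempty sets of interpretations. Then there exists a greatest (with respect to inclusion) nonempty set N of interpretations that coincides with M₁ on U and with M₂ on the complement Uᶜ of U. Furthermore, this N is semi-saturated relative to U and contains M₁ ∩ M₂. -/
open Set

variable {A P : Type*}

/-!
The greatest candidate is the set of all interpretations whose `U`-part is the `U`-part of a
model of `M₁` and whose `Uᶜ`-part is the `Uᶜ`-part of a model of `M₂`. Any `N'` with the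
prescribed restrictions lies inside it, and it attains every prescribed restriction because
`I₁|U ∪ I₂|Uᶜ` restricts to `I₁|U` on `U` and to `I₂|Uᶜ` on `Uᶜ`.
-/

section Restriction

variable (pred : A → P)

theorem restr_union_restr_of_disjoint {U V : Set P} (hUV : Disjoint U V) (I J : Set A) :
    restr pred U (restr pred U I ∪ restr pred V J) = restr pred U I := by
  ext p
  simp only [restr, mem_ofPred_eq, mem_union]
  constructor
  · rintro ⟨⟨hpI, -⟩ | ⟨-, hpV⟩, hpU⟩
    · exact ⟨hpI, hpU⟩
    · exact (hUV.notMem_of_mem_left hpU hpV).elim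
  · rintro ⟨hpI, hpU⟩
    exact ⟨Or.inl ⟨hpI, hpU⟩, hpU⟩

theorem restr_union_restr_compl_left (U : Set P) (I J : Set A) :
    restr pred U (restr pred U I ∪ restr pred Uᶜ J) = restr pred U I :=
  restr_union_restr_of_disjoint pred disjoint_compl_right I J

theorem restr_union_restr_compl_right (U : Set P) (I J : Set A) :
    restr pred Uᶜ (restr pred U I ∪ restr pred Uᶜ J) = restr pred Uᶜ J := by
  rw [union_comm]
  exact restr_union_restr_of_disjoint pred disjoint_compl_left J I

end Restriction

def glue (pred : A → P) (U : Set P) (M₁ M₂ : Set (Set A)) : Set (Set A) :=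
  {I | restr pred U I ∈ restrM pred U M₁ ∧ restr pred Uᶜ I ∈ restrM pred Uᶜ M₂}

section Glue

variable {pred : A → P} {U : Set P} {M₁ M₂ : Set (Set A)}

theorem restr_union_restr_compl_mem_glue {I J : Set A} (hI : I ∈ M₁) (hJ : J ∈ M₂) :
    restr pred U I ∪ restr pred Uᶜ J ∈ glue pred U M₁ M₂ := by
  constructor
  · rw [restr_union_restr_compl_left]
    exact mem_image_of_mem _ hI
  · rw [restr_union_restr_compl_right]
    exact mem_image_of_mem _ hJ

theorem glue_nonempty (h₁ : M₁.Nonempty) (h₂ : M₂.Nonempty) :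
    (glue pred U M₁ M₂).Nonempty :=
  ⟨_, restr_union_restr_compl_mem_glue h₁.some_mem h₂.some_mem⟩

theorem restrM_glue_left_subset : restrM pred U (glue pred U M₁ M₂) ⊆ restrM pred U M₁ := by
  rintro _ ⟨I, hI, rfl⟩
  exact hI.1

theorem restrM_glue_right_subset : restrM pred Uᶜ (glue pred U M₁ M₂) ⊆ restrM pred Uᶜ M₂ := by
  rintro _ ⟨I, hI, rfl⟩
  exact hI.2

theorem restrM_glue_left (h₂ : M₂.Nonempty) :
    restrM pred U (glue pred U M₁ M₂) = restrM pred U M₁ := by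
  refine restrM_glue_left_subset.antisymm ?_
  rintro _ ⟨I, hI, rfl⟩
  exact ⟨_, restr_union_restr_compl_mem_glue hI h₂.some_mem,
    restr_union_restr_compl_left pred U I _⟩

theorem restrM_glue_right (h₁ : M₁.Nonempty) :
    restrM pred Uᶜ (glue pred U M₁ M₂) = restrM pred Uᶜ M₂ := by
  refine restrM_glue_right_subset.antisymm ?_
  rintro _ ⟨J, hJ, rfl⟩
  exact ⟨_, restr_union_restr_compl_mem_glue h₁.some_mem hJ,
    restr_union_restr_compl_right pred U _ J⟩

theorem subset_glue {N : Set (Set A)} (h₁ : restrM pred U N ⊆ restrM pred U M₁)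
    (h₂ : restrM pred Uᶜ N ⊆ restrM pred Uᶜ M₂) : N ⊆ glue pred U M₁ M₂ :=
  fun _ hI ↦ ⟨h₁ (mem_image_of_mem _ hI), h₂ (mem_image_of_mem _ hI)⟩

theorem inter_subset_glue : M₁ ∩ M₂ ⊆ glue pred U M₁ M₂ :=
  subset_glue (image_mono inter_subset_left) (image_mono inter_subset_right)

theorem semiSaturated_glue : semiSaturated pred U (glue pred U M₁ M₂) :=
  fun _ hU hUc ↦ ⟨restrM_glue_left_subset hU, restrM_glue_right_subset hUc⟩

end Glue

theorem stmt_11 (pred : A → P) (U : Set P) (M₁ M₂ : Set (Set A))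
    (h₁ : M₁.Nonempty) (h₂ : M₂.Nonempty) :
    ∃ N : Set (Set A), N.Nonempty ∧
      restrM pred U N = restrM pred U M₁ ∧
      restrM pred Uᶜ N = restrM pred Uᶜ M₂ ∧
      (∀ N' : Set (Set A), N'.Nonempty →
        restrM pred U N' = restrM pred U M₁ →
        restrM pred Uᶜ N' = restrM pred Uᶜ M₂ → N' ⊆ N) ∧
      semiSaturated pred U N ∧ M₁ ∩ M₂ ⊆ N :=
  ⟨glue pred U M₁ M₂, glue_nonempty h₁ h₂, restrM_glue_left h₂, restrM_glue_right h₁,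
    fun _ _ hU hUc ↦ subset_glue hU.le hUc.le, semiSaturated_glue, inter_subset_glue⟩
end

section
/- Let (U_α) be an indexed family of sets of predicate symbols and (X_α) be an indexed family (over the same index type) of sets of interpretations such that for every index α, X_α is saturated relative to U_α. Then the intersection ⋂_α X_α is saturated relative to the union ⋃_α U_α. -/
open Set

variable {A P : Type*}

theorem restr_restr_of_subset (pred : A → P) {U V : Set P} (hUV : U ⊆ V) (I : Set A) :
    restr pred U (restr pred V I) = restr pred U I := by
  ext p
  exact ⟨fun hp => ⟨hp.1.1, hp.2⟩, fun hp => ⟨⟨hp.1, hUV hp.2⟩, hp.2⟩⟩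

theorem saturated.mono {pred : A → P} {U V : Set P} {M : Set (Set A)}
    (hM : saturated pred U M) (hUV : U ⊆ V) : saturated pred V M := by
  rintro I ⟨J, hJ, hJI⟩
  refine hM I ⟨J, hJ, ?_⟩
  rw [← restr_restr_of_subset pred hUV J, hJI, restr_restr_of_subset pred hUV I]

theorem saturated_iInter {ι : Type*} {pred : A → P} {U : Set P} {X : ι → Set (Set A)}
    (hX : ∀ α, saturated pred U (X α)) : saturated pred U (⋂ α, X α) := by
  rintro I ⟨J, hJ, hJI⟩
  exact mem_iInter.2 fun α => hX α I ⟨J, mem_iInter.1 hJ α, hJI⟩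

theorem stmt_12 {ι : Type*} (pred : A → P) (U : ι → Set P)
    (X : ι → Set (Set A)) (h : ∀ α, saturated pred (U α) (X α)) :
    saturated pred (⋃ α, U α) (⋂ α, X α) :=
  saturated_iInter fun α => (h α).mono (subset_iUnion U α)
end

section
/- Let U be a set of predicate symbols, N be a set of interpretations that is saturated relative to U, and I, J be interpretations. If J ∈ I ⊕ N, then I coincides with J on the complement Uᶜ of U, i.e. I|Uᶜ = J|Uᶜ. -/
open Set

variable {A P : Type*}

/-! Splicing `J` on `U` with `I` off `U` gives `K = J|U ∪ I|Uᶜ`, which lies in `N` by saturation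
since `K|U = J|U`. `K` differs from `I` only where `J` does, and only on `U`; so `K ≤_I J`, and
`J ≤_I K` would force `I` and `J` to agree off `U`. Hence minimality of `J` fails unless
`I|Uᶜ = J|Uᶜ`. -/

section Splice

variable (pred : A → P) (U : Set P) (I J : Set A)

theorem restr_union_restr_compl :
    restr pred U (restr pred U J ∪ restr pred Uᶜ I) = restr pred U J := by
  ext p
  simp only [restr, mem_union, mem_ofPred_eq, mem_compl_iff]
  tauto

theorem diffP_union_restr_compl_of_mem {Q : P} (hQ : Q ∈ U) :
    diffP pred Q I (restr pred U J ∪ restr pred Uᶜ I) = diffP pred Q I J := by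
  ext p
  simp only [diffP, restr, mem_symmDiff, mem_union, mem_ofPred_eq, mem_compl_iff]
  constructor <;> rintro ⟨h, rfl⟩ <;> exact ⟨by tauto, rfl⟩

theorem diffP_union_restr_compl_of_notMem {Q : P} (hQ : Q ∉ U) :
    diffP pred Q I (restr pred U J ∪ restr pred Uᶜ I) = ∅ := by
  ext p
  simp only [diffP, restr, mem_symmDiff, mem_union, mem_ofPred_eq, mem_compl_iff,
    mem_empty_iff_false, iff_false, not_and]
  rintro h rfl
  tauto

theorem closerLE_union_restr_compl :
    closerLE pred I (restr pred U J ∪ restr pred Uᶜ I) J := by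
  intro Q
  by_cases hQ : Q ∈ U
  · rw [diffP_union_restr_compl_of_mem pred U I J hQ]
  · rw [diffP_union_restr_compl_of_notMem pred U I J hQ]
    exact empty_subset _

theorem restr_compl_eq_of_diffP_eq_empty (h : ∀ Q ∉ U, diffP pred Q I J = ∅) :
    restr pred Uᶜ I = restr pred Uᶜ J := by
  ext p
  have hp : pred p ∉ U → p ∉ diffP pred (pred p) I J := fun hU => by
    rw [h _ hU]
    exact notMem_empty p
  simp only [diffP, restr, mem_symmDiff, mem_ofPred_eq, mem_compl_iff] at hp ⊢
  tauto

theorem restr_compl_eq_of_closerLE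
    (h : closerLE pred I J (restr pred U J ∪ restr pred Uᶜ I)) :
    restr pred Uᶜ I = restr pred Uᶜ J :=
  restr_compl_eq_of_diffP_eq_empty pred U I J fun Q hQ =>
    subset_eq_empty (h Q) (diffP_union_restr_compl_of_notMem pred U I J hQ)

end Splice

theorem saturated.union_restr_compl_mem {pred : A → P} {U : Set P} {N : Set (Set A)}
    (hN : saturated pred U N) {J : Set A} (hJ : J ∈ N) (I : Set A) :
    restr pred U J ∪ restr pred Uᶜ I ∈ N :=
  hN _ ⟨J, hJ, (restr_union_restr_compl pred U I J).symm⟩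

theorem stmt_16 (pred : A → P) (U : Set P) (N : Set (Set A))
    (hN : saturated pred U N) (I J : Set A)
    (hJ : J ∈ oplusI pred I N) :
    restr pred Uᶜ I = restr pred Uᶜ J := by
  obtain ⟨hJN, hJmin⟩ := hJ
  by_contra hne
  exact hJmin ⟨_, hN.union_restr_compl_mem hJN I, closerLE_union_restr_compl pred U I J,
    fun hle => hne (restr_compl_eq_of_closerLE pred U I J hle)⟩
end

section
/- Let S = (S_α) be a saturation sequence, N be a set of interpretations that is sequence-saturated relative to S, and I, J be interpretations. Then J ∈ I ⊕ N if and only if for every α, J|S_α ∈ (I|S_α) ⊕ (N|S_α). -/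
open Set

variable {A P : Type*}

/-!
The order `≤_I` compares interpretations predicate by predicate, so it splits along the blocks
`S α`. If some `K ∈ N` beats `J` on the block `S α`, splice `K` on `S α` with `J` elsewhere:
since the blocks are disjoint, every block of the splice is a block of `K` or of `J`, so the
splice lies in `N` by saturation, and it beats `J` globally. Conversely, a global improvement
`J' <_I J` is strict at some predicate symbol `Q`, and restricting to the block containing `Q`
gives a local improvement. Saturation also recovers `J ∈ N` from its blocks.
-/

section Restriction

variable (pred : A → P) {U V : Set P}

lemma diffP_restr {Q : P} (hQ : Q ∈ U) (I J : Set A) :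
    diffP pred Q (restr pred U I) (restr pred U J) = diffP pred Q I J := by
  ext p
  by_cases hp : pred p = Q
  · simp [diffP, mem_symmDiff, restr, hp, hQ]
  · simp [diffP, hp]

lemma diffP_restr_of_notMem {Q : P} (hQ : Q ∉ U) (I J : Set A) :
    diffP pred Q (restr pred U I) (restr pred U J) = ∅ := by
  ext p
  by_cases hp : pred p = Q
  · simp [diffP, mem_symmDiff, restr, hp, hQ]
  · simp [diffP, hp]

lemma closerLE_restr_iff (I J J' : Set A) :
    closerLE pred (restr pred U I) (restr pred U J) (restr pred U J') ↔
      ∀ Q ∈ U, diffP pred Q I J ⊆ diffP pred Q I J' := by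
  refine forall_congr' fun Q => ?_
  by_cases hQ : Q ∈ U
  · simp [diffP_restr pred hQ, hQ]
  · simp [diffP_restr_of_notMem pred hQ, hQ]

lemma closerLE_iff_restr_and_restr_compl (I J J' : Set A) :
    closerLE pred I J J' ↔
      closerLE pred (restr pred U I) (restr pred U J) (restr pred U J') ∧
        closerLE pred (restr pred Uᶜ I) (restr pred Uᶜ J) (restr pred Uᶜ J') := by
  simp only [closerLE_restr_iff]
  refine ⟨fun h => ⟨fun Q _ => h Q, fun Q _ => h Q⟩, fun ⟨hU, hUc⟩ Q => ?_⟩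
  by_cases hQ : Q ∈ U
  · exact hU Q hQ
  · exact hUc Q hQ

lemma closerLE_iff_forall_restr {ι : Type*} {S : ι → Set P} (hcov : ⋃ α, S α = univ)
    (I J J' : Set A) :
    closerLE pred I J J' ↔
      ∀ α, closerLE pred (restr pred (S α) I) (restr pred (S α) J) (restr pred (S α) J') := by
  simp only [closerLE_restr_iff]
  refine ⟨fun h α Q _ => h Q, fun h Q => ?_⟩
  obtain ⟨α, hQ⟩ := mem_iUnion.1 (hcov ▸ mem_univ Q)
  exact h α Q hQ

lemma restr_splice_self (K J : Set A) :
    restr pred U (restr pred U K ∪ restr pred Uᶜ J) = restr pred U K := by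
  ext p
  simp only [restr, mem_union, mem_compl_iff, mem_ofPred_eq]
  tauto

lemma restr_splice_of_disjoint (hVU : Disjoint V U) (K J : Set A) :
    restr pred V (restr pred U K ∪ restr pred Uᶜ J) = restr pred V J := by
  ext p
  have hV : pred p ∈ V → pred p ∉ U := fun h => disjoint_left.1 hVU h
  simp only [restr, mem_union, mem_compl_iff, mem_ofPred_eq]
  tauto

lemma closerLT_splice_iff (I K J : Set A) :
    closerLT pred I (restr pred U K ∪ restr pred Uᶜ J) J ↔
      closerLT pred (restr pred U I) (restr pred U K) (restr pred U J) := by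
  have hUc := restr_splice_of_disjoint pred (disjoint_compl_left (a := U)) K J
  rw [closerLT, closerLT, closerLE_iff_restr_and_restr_compl pred (U := U) I _ J,
    closerLE_iff_restr_and_restr_compl pred (U := U) I J, restr_splice_self, hUc]
  simp [closerLE]

end Restriction

section Saturation

variable {ι : Type*} (pred : A → P) {S : ι → Set P} {N : Set (Set A)}

lemma seqSaturated.splice_mem (hN : seqSaturated pred S N)
    (hdisj : Pairwise (Function.onFun Disjoint S)) (α : ι) {K J : Set A} (hK : K ∈ N)
    (hJ : J ∈ N) : restr pred (S α) K ∪ restr pred (S α)ᶜ J ∈ N := by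
  refine hN _ fun β => ?_
  by_cases hβ : β = α
  · subst hβ
    rw [restr_splice_self]
    exact mem_image_of_mem _ hK
  · rw [restr_splice_of_disjoint pred (hdisj hβ)]
    exact mem_image_of_mem _ hJ

lemma restr_mem_oplusI (hN : seqSaturated pred S N)
    (hdisj : Pairwise (Function.onFun Disjoint S)) {I J : Set A} (hJ : J ∈ oplusI pred I N)
    (α : ι) :
    restr pred (S α) J ∈ oplusI pred (restr pred (S α) I) (restrM pred (S α) N) := by
  refine ⟨mem_image_of_mem _ hJ.1, ?_⟩
  rintro ⟨_, ⟨K, hK, rfl⟩, hlt⟩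
  exact hJ.2 ⟨_, hN.splice_mem pred hdisj α hK hJ.1, (closerLT_splice_iff pred I K J).2 hlt⟩

lemma mem_oplusI_of_forall_restr_mem (hN : seqSaturated pred S N) (hcov : ⋃ α, S α = univ)
    {I J : Set A}
    (h : ∀ α, restr pred (S α) J ∈ oplusI pred (restr pred (S α) I) (restrM pred (S α) N)) :
    J ∈ oplusI pred I N := by
  refine ⟨hN J fun α => (h α).1, ?_⟩
  rintro ⟨J', hJ', hle, hnle⟩
  rw [closerLE_iff_forall_restr pred hcov] at hle hnle
  push Not at hnle
  obtain ⟨α, hα⟩ := hnle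
  exact (h α).2 ⟨_, mem_image_of_mem _ hJ', hle α, hα⟩

end Saturation

theorem stmt_18 {ι : Type*} (pred : A → P) (S : ι → Set P)
    (hdisj : Pairwise (Function.onFun Disjoint S)) (hcov : ⋃ α, S α = Set.univ)
    (N : Set (Set A)) (hN : seqSaturated pred S N) (I J : Set A) :
    J ∈ oplusI pred I N ↔
      ∀ α, restr pred (S α) J ∈
        oplusI pred (restr pred (S α) I) (restrM pred (S α) N) :=
  ⟨fun hJ => restr_mem_oplusI pred hN hdisj hJ, mem_oplusI_of_forall_restr_mem pred hN hcov⟩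
end
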